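/- arXiv:0709.0648 — 6 statements merged into one kernel-verified Lean document; each statement's English description precedes it below -/
import Mathlib

section
/- If the set transformation R satisfies ν(R(∅)) = 0, then for any nonnegative simple function f = Σ_{k=1}^N b_k χ_{F_k} with b_k > 0 and F_1 ⊆ F_2 ⊆ ⋯ ⊆ F_N an increasing sequence of measurable sets, the rearrangement satisfies f*_R(y) = Σ_{k=1}^N b_k χ_{R(F_k)}(y) for ν-a.e. y ∈ Y. -/
open MeasureTheory Set Filter
open scoped ENNReal

/-- The rearrangement of `f` with respect to the set transformation `R`,
defined by the layer cake formula `f*_R(y) = ∫₀^∞ χ_{R({|f| > t})}(y) dt`. -/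
noncomputable def rearr {X Y : Type*} (R : Set X → Set Y) (f : X → ℝ) (y : Y) : ℝ≥0∞ :=
  ∫⁻ t in Set.Ioi (0 : ℝ), (R {x | t < |f x|}).indicator (fun _ => (1 : ℝ≥0∞)) y

/-!
Let `c j = ∑_{k ≥ j} b k` be the tail sums, so that `c 0 ≥ c 1 ≥ ⋯ ≥ c N = 0`. Since the `F k`
increase, `f ≥ c k` on `F k` and `f ≤ c (k + 1)` off `F k`; hence the level set `{f > t}` is `F k`
for `t ∈ [c (k + 1), c k)` and is empty for `t ≥ c 0`. The layer-cake integrand is thus a step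
function of `t`: it equals `χ_{R(F k)}(y)` on an interval of length `b k`, and `χ_{R ∅}(y)`, which
vanishes for `ν`-a.e. `y`, beyond `c 0`.
-/

lemma exists_mem_Ico_of_le_of_lt {α : Type*} [LinearOrder α] (c : ℕ → α) {N : ℕ} {t : α}
    (hN : c N ≤ t) (h0 : t < c 0) :
    ∃ k < N, t ∈ Ico (c (k + 1)) (c k) := by
  induction N with
  | zero => exact absurd h0 (not_lt.mpr hN)
  | succ n ih =>
    by_cases hn : c n ≤ t
    · obtain ⟨k, hk, hkt⟩ := ih hn
      exact ⟨k, hk.trans n.lt_succ_self, hkt⟩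
    · exact ⟨n, n.lt_succ_self, hN, not_le.mp hn⟩

lemma Antitone.eq_of_mem_Ico {α : Type*} [Preorder α] {c : ℕ → α} (hc : Antitone c)
    {k l : ℕ} {t : α} (hk : t ∈ Ico (c (k + 1)) (c k)) (hl : t ∈ Ico (c (l + 1)) (c l)) : k = l := by
  by_contra hkl
  rcases Nat.lt_or_gt_of_ne hkl with h | h
  · exact (hk.1.trans_lt hl.2).not_ge (hc h)
  · exact (hl.1.trans_lt hk.2).not_ge (hc h)

lemma eq_sum_indicator_Ico_of_antitone {N : ℕ} {c : ℕ → ℝ} (hc : Antitone c) {g : ℝ → ℝ≥0∞}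
    {a : Fin N → ℝ≥0∞} (hg : ∀ k : Fin N, ∀ t ∈ Ico (c (k + 1)) (c k), g t = a k)
    (hg0 : ∀ t, c 0 ≤ t → g t = 0) {t : ℝ} (ht : c N ≤ t) :
    g t = ∑ k : Fin N, (Ico (c (k + 1)) (c k)).indicator (fun _ => a k) t := by
  by_cases htop : c 0 ≤ t
  · refine (hg0 t htop).trans (Finset.sum_eq_zero fun k _ => indicator_of_notMem ?_ _).symm
    exact fun hk => hk.2.not_ge ((hc k.val.zero_le).trans htop)
  obtain ⟨k, hkN, hk⟩ := exists_mem_Ico_of_le_of_lt c ht (not_le.mp htop)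
  rw [Finset.sum_eq_single ⟨k, hkN⟩, indicator_of_mem hk, hg ⟨k, hkN⟩ t hk]
  · exact fun l _ hl => indicator_of_notMem (fun htl => hl (Fin.ext (hc.eq_of_mem_Ico htl hk))) _
  · exact fun h => (h (Finset.mem_univ _)).elim

lemma lintegral_Ioi_eq_sum_of_antitone {N : ℕ} {c : ℕ → ℝ} (hc : Antitone c) (hcN : c N = 0)
    {g : ℝ → ℝ≥0∞} (a : Fin N → ℝ≥0∞) (hg : ∀ k : Fin N, ∀ t ∈ Ico (c (k + 1)) (c k), g t = a k)
    (hg0 : ∀ t, c 0 ≤ t → g t = 0) :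
    ∫⁻ t in Ioi 0, g t = ∑ k : Fin N, ENNReal.ofReal (c k - c (k + 1)) * a k := by
  have hIco_subset : ∀ k : Fin N, Ico (c (k + 1)) (c k) ⊆ Ici 0 := fun k t ht =>
    hcN ▸ (hc k.isLt).trans ht.1
  calc ∫⁻ t in Ioi 0, g t
      = ∫⁻ t in Ici 0, ∑ k : Fin N, (Ico (c (k + 1)) (c k)).indicator (fun _ => a k) t := by
        rw [setLIntegral_congr Ioi_ae_eq_Ici]
        exact setLIntegral_congr_fun measurableSet_Ici fun t ht =>
          eq_sum_indicator_Ico_of_antitone hc hg hg0 (hcN ▸ ht)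
    _ = ∑ k : Fin N, ENNReal.ofReal (c k - c (k + 1)) * a k := by
        rw [lintegral_finsetSum _ fun k _ => measurable_const.indicator measurableSet_Ico]
        refine Finset.sum_congr rfl fun k _ => ?_
        rw [lintegral_indicator_const measurableSet_Ico, Measure.restrict_apply measurableSet_Ico,
          inter_eq_left.mpr (hIco_subset k), Real.volume_Ico, mul_comm]

section TailSum

variable {N : ℕ} (b : Fin N → ℝ)

def tailSum (j : ℕ) : ℝ := ∑ k : Fin N with j ≤ k.val, b k

variable {b}

lemma tailSum_antitone (hb : ∀ k, 0 ≤ b k) : Antitone (tailSum b) := fun _ _ hij =>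
  Finset.sum_le_sum_of_subset_of_nonneg
    (Finset.monotone_filter_right _ fun _ _ => hij.trans)
    fun k _ _ => hb k

lemma tailSum_of_le {j : ℕ} (hj : N ≤ j) : tailSum b j = 0 :=
  Finset.sum_eq_zero fun k hk => absurd ((Finset.mem_filter.mp hk).2.trans_lt k.isLt) hj.not_gt

lemma tailSum_sub_tailSum_succ (k : Fin N) : tailSum b k - tailSum b (k + 1) = b k := by
  have hsplit : (Finset.univ.filter fun l : Fin N => (k : ℕ) ≤ l) =
      insert k (Finset.univ.filter fun l : Fin N => (k : ℕ) + 1 ≤ l) := by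
    ext l
    simp only [Finset.mem_filter, Finset.mem_univ, true_and, Finset.mem_insert, Fin.ext_iff]
    omega
  rw [tailSum, tailSum, hsplit, Finset.sum_insert (by simp), add_sub_cancel_right]

variable {X : Type*} {F : Fin N → Set X} {x : X}

lemma sum_mul_indicator_nonneg (hb : ∀ k, 0 ≤ b k) :
    0 ≤ ∑ k, b k * (F k).indicator (fun _ => (1 : ℝ)) x :=
  Finset.sum_nonneg fun l _ => mul_nonneg (hb l) (indicator_nonneg (fun _ _ => zero_le_one) x)

lemma tailSum_le_sum_mul_indicator (hb : ∀ k, 0 ≤ b k) {j : ℕ}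
    (hx : ∀ l : Fin N, j ≤ l → x ∈ F l) :
    tailSum b j ≤ ∑ k, b k * (F k).indicator (fun _ => (1 : ℝ)) x := by
  rw [tailSum, Finset.sum_filter]
  refine Finset.sum_le_sum fun l _ => ?_
  split_ifs with hl
  · rw [indicator_of_mem (hx l hl), mul_one]
  · exact mul_nonneg (hb l) (indicator_nonneg (fun _ _ => zero_le_one) x)

lemma sum_mul_indicator_le_tailSum (hb : ∀ k, 0 ≤ b k) {j : ℕ}
    (hx : ∀ l : Fin N, l < j → x ∉ F l) :
    ∑ k, b k * (F k).indicator (fun _ => (1 : ℝ)) x ≤ tailSum b j := by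
  rw [tailSum, Finset.sum_filter]
  refine Finset.sum_le_sum fun l _ => ?_
  split_ifs with hl
  · exact mul_le_of_le_one_right (hb l) (indicator_le_self' (fun _ _ => zero_le_one) x)
  · rw [indicator_of_notMem (hx l (not_le.mp hl)), mul_zero]

lemma setOf_lt_abs_sum_mul_indicator_eq (hb : ∀ k, 0 ≤ b k) (hF : Monotone F) {k : Fin N}
    {t : ℝ} (ht : t ∈ Ico (tailSum b (k + 1)) (tailSum b k)) :
    {x | t < |∑ k, b k * (F k).indicator (fun _ => (1 : ℝ)) x|} = F k := by
  ext x
  rw [mem_ofPred_eq, abs_of_nonneg (sum_mul_indicator_nonneg hb)]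
  constructor
  · intro hlt
    by_contra hx
    refine (ht.1.trans_lt hlt).not_ge (sum_mul_indicator_le_tailSum hb fun l hl hxl => hx ?_)
    exact hF (Nat.le_of_lt_succ hl : l ≤ k) hxl
  · exact fun hx => ht.2.trans_le (tailSum_le_sum_mul_indicator hb fun l hl => hF hl hx)

lemma setOf_lt_abs_sum_mul_indicator_eq_empty (hb : ∀ k, 0 ≤ b k) {t : ℝ} (ht : tailSum b 0 ≤ t) :
    {x | t < |∑ k, b k * (F k).indicator (fun _ => (1 : ℝ)) x|} = ∅ := by
  refine eq_empty_of_forall_notMem fun x hlt => ?_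
  rw [mem_ofPred_eq, abs_of_nonneg (sum_mul_indicator_nonneg hb)] at hlt
  exact (ht.trans_lt hlt).not_ge
    (sum_mul_indicator_le_tailSum hb fun l hl => absurd hl l.val.not_lt_zero)

end TailSum

theorem stmt0_general {X Y : Type*} [MeasurableSpace Y]
    (ν : Measure Y) (R : Set X → Set Y)
    (hR0 : ν (R ∅) = 0)
    (N : ℕ) (b : Fin N → ℝ) (hb : ∀ k, 0 < b k)
    (F : Fin N → Set X)
    (hFmono : ∀ k l : Fin N, k ≤ l → F k ⊆ F l) :
    ∀ᵐ y ∂ν,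
      rearr R (fun x => ∑ k, b k * (F k).indicator (fun _ => (1 : ℝ)) x) y
        = ∑ k, ENNReal.ofReal (b k) * (R (F k)).indicator (fun _ => (1 : ℝ≥0∞)) y := by
  have hb₀ : ∀ k, 0 ≤ b k := fun k => (hb k).le
  filter_upwards [measure_eq_zero_iff_ae_notMem.mp hR0] with y hy
  rw [rearr, lintegral_Ioi_eq_sum_of_antitone (tailSum_antitone hb₀) (tailSum_of_le le_rfl)
    (fun k => (R (F k)).indicator (fun _ => 1) y)
    (fun k t ht => by rw [setOf_lt_abs_sum_mul_indicator_eq hb₀ (fun k l => hFmono k l) ht])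
    (fun t ht => by rw [setOf_lt_abs_sum_mul_indicator_eq_empty hb₀ ht, indicator_of_notMem hy])]
  simp only [tailSum_sub_tailSum_succ]

theorem stmt0 {X Y : Type*} [MeasurableSpace X] [MeasurableSpace Y]
    (μ : Measure X) (ν : Measure Y) (R : Set X → Set Y)
    (hR0 : ν (R ∅) = 0)
    (N : ℕ) (b : Fin N → ℝ) (hb : ∀ k, 0 < b k)
    (F : Fin N → Set X) (hFmeas : ∀ k, MeasurableSet (F k))
    (hFmono : ∀ k l : Fin N, k ≤ l → F k ⊆ F l) :
    ∀ᵐ y ∂ν,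
      rearr R (fun x => ∑ k, b k * (F k).indicator (fun _ => (1 : ℝ)) x) y
        = ∑ k, ENNReal.ofReal (b k) * (R (F k)).indicator (fun _ => (1 : ℝ≥0∞)) y :=
  stmt0_general ν R hR0 N b hb F hFmono
end

section
/- If R is monotone (E ⊆ F implies R(E) ⊆ R(F)) and ν(R(∅)) = 0, then for f = Σ_{j=1}^N a_j χ_{E_j} with a_1 > a_2 > ⋯ > a_N > 0 and the E_j pairwise disjoint measurable sets, setting F_j = E_1 ∪ ⋯ ∪ E_j and F_0 = ∅, we have f*_R(y) = Σ_{j=1}^N a_j χ_{R(F_j) \ R(F_{j-1})}(y) for ν-a.e. y ∈ Y. -/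
/-!
Fix `y` outside the null set `R ∅`. The sets `R (F m)` increase with `m`, so either
`y ∉ R (F N)` or `y ∈ R (F (j + 1)) \ R (F j)` for exactly one `j`. Since `a` is decreasing and
positive, for `t > 0` the superlevel set `{|f| > t}` contains `F (j + 1)` when `t < a j` and is
contained in `F j` when `a j ≤ t`; monotonicity of `R` then makes the integrand of `f*_R(y)` the
indicator of `t < a j`, whose integral over `t > 0` is `a j`, the only surviving term on the right.
(If `y ∉ R (F N)`, both sides vanish.)
-/

open MeasureTheory Set Filter
open scoped ENNReal

open Function

lemma rearr_eq_ofReal {X Y : Type*} {R : Set X → Set Y} {f : X → ℝ} {y : Y} {c : ℝ}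
    (h : ∀ t, 0 < t → (y ∈ R {x | t < |f x|} ↔ t < c)) : rearr R f y = ENNReal.ofReal c := by
  have hcongr : ∀ t ∈ Ioi (0 : ℝ), (R {x | t < |f x|}).indicator (fun _ => (1 : ℝ≥0∞)) y
      = (Iio c).indicator 1 t := fun t ht => by
    simp only [indicator, h t ht, mem_Iio, Pi.one_apply]
  rw [rearr, setLIntegral_congr_fun measurableSet_Ioi hcongr,
    lintegral_indicator_one measurableSet_Iio, Measure.restrict_apply measurableSet_Iio,
    Iio_inter_Ioi, Real.volume_Ioo, sub_zero]

section MonotoneSets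

variable {Y : Type*} {S : ℕ → Set Y} {y : Y} {N : ℕ}

lemma Monotone.exists_mem_sdiff (hS : Monotone S) (h0 : y ∉ S 0) (hN : y ∈ S N) :
    ∃ j : Fin N, y ∈ S (j + 1) \ S j := by
  obtain ⟨n, hn, hn1⟩ := Nat.exists_not_and_succ_of_not_zero_of_exists (p := (y ∈ S ·)) h0 ⟨N, hN⟩
  exact ⟨⟨n, lt_of_not_ge fun h => hn (hS h hN)⟩, hn1, hn⟩

lemma Monotone.sum_mul_indicator_sdiff_of_mem (hS : Monotone S) (b : Fin N → ℝ≥0∞) {j : Fin N}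
    (hy : y ∈ S (j + 1) \ S j) :
    ∑ i : Fin N, b i * (S (i + 1) \ S i).indicator (fun _ => 1) y = b j := by
  refine (Finset.sum_eq_single j (fun i _ hij => ?_) (by simp)).trans (by simp [hy])
  have hy' : y ∉ S (i + 1) \ S i := by
    rcases (Fin.val_ne_of_ne hij).lt_or_gt with hlt | hgt
    · exact fun hi => hy.2 (hS (Nat.succ_le_of_lt hlt) hi.1)
    · exact fun hi => hi.2 (hS (Nat.succ_le_of_lt hgt) hy.1)
  simp [hy']

lemma Monotone.sum_mul_indicator_sdiff_of_notMem (hS : Monotone S) (b : Fin N → ℝ≥0∞)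
    (hy : y ∉ S N) : ∑ i : Fin N, b i * (S (i + 1) \ S i).indicator (fun _ => 1) y = 0 :=
  Finset.sum_eq_zero fun i _ => by
    simp [show y ∉ S (i + 1) \ S i from fun hi => hy (hS i.isLt hi.1)]

end MonotoneSets

section SimpleFunction

variable {X : Type*} {N : ℕ}

def partialUnion (E : Fin N → Set X) (m : ℕ) : Set X := ⋃ (k : Fin N) (_ : (k : ℕ) < m), E k

noncomputable def indicatorSum (a : Fin N → ℝ) (E : Fin N → Set X) (x : X) : ℝ :=
  ∑ j, a j * (E j).indicator (fun _ => (1 : ℝ)) x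

variable {a : Fin N → ℝ} {E : Fin N → Set X}

lemma mem_partialUnion {m : ℕ} {x : X} :
    x ∈ partialUnion E m ↔ ∃ k : Fin N, (k : ℕ) < m ∧ x ∈ E k := by
  simp [partialUnion]

lemma partialUnion_zero : partialUnion E 0 = ∅ := by simp [partialUnion]

lemma partialUnion_mono : Monotone (partialUnion E) := fun _ _ hmn _ hx =>
  let ⟨k, hk, hxk⟩ := mem_partialUnion.1 hx
  mem_partialUnion.2 ⟨k, hk.trans_le hmn, hxk⟩

lemma indicatorSum_of_mem (hE : Pairwise (Disjoint on E)) {k : Fin N} {x : X} (hx : x ∈ E k) :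
    indicatorSum a E x = a k := by
  rw [indicatorSum, Finset.sum_eq_single k (fun j _ hjk => by
    simp [indicator_of_notMem (disjoint_left.1 (hE hjk.symm) hx)]) (by simp)]
  simp [hx]

lemma lt_abs_indicatorSum_iff (ha : ∀ j, 0 < a j) (hE : Pairwise (Disjoint on E))
    {t : ℝ} (ht : 0 ≤ t) {x : X} : t < |indicatorSum a E x| ↔ ∃ k, x ∈ E k ∧ t < a k := by
  by_cases hx : ∃ k, x ∈ E k
  · obtain ⟨k, hk⟩ := hx
    rw [indicatorSum_of_mem hE hk, abs_of_pos (ha k)]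
    refine ⟨fun h => ⟨k, hk, h⟩, ?_⟩
    rintro ⟨l, hl, h⟩
    obtain rfl : l = k := by
      by_contra hlk
      exact disjoint_left.1 (hE hlk) hl hk
    exact h
  · simp [indicatorSum, not_exists.1 hx, ht.not_gt]

lemma setOf_lt_abs_indicatorSum_subset (ha : ∀ j, 0 < a j) (hE : Pairwise (Disjoint on E))
    {t : ℝ} (ht : 0 ≤ t) : {x | t < |indicatorSum a E x|} ⊆ partialUnion E N := fun _ hx =>
  let ⟨k, hxk, _⟩ := (lt_abs_indicatorSum_iff ha hE ht).1 hx
  mem_partialUnion.2 ⟨k, k.isLt, hxk⟩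

lemma setOf_lt_abs_indicatorSum_subset_of_le (ha : ∀ j, 0 < a j) (hE : Pairwise (Disjoint on E))
    (hant : Antitone a) {t : ℝ} (ht : 0 ≤ t) {j : Fin N} (hj : a j ≤ t) :
    {x | t < |indicatorSum a E x|} ⊆ partialUnion E j := fun _ hx =>
  let ⟨k, hxk, hk⟩ := (lt_abs_indicatorSum_iff ha hE ht).1 hx
  mem_partialUnion.2 ⟨k, lt_of_not_ge fun hjk => (hk.trans_le (hant hjk)).not_ge hj, hxk⟩

lemma partialUnion_succ_subset_setOf_lt_abs_indicatorSum (ha : ∀ j, 0 < a j)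
    (hE : Pairwise (Disjoint on E)) (hant : Antitone a) {t : ℝ} (ht : 0 ≤ t) {j : Fin N}
    (hj : t < a j) : partialUnion E (j + 1) ⊆ {x | t < |indicatorSum a E x|} := fun _ hx =>
  let ⟨k, hk, hxk⟩ := mem_partialUnion.1 hx
  (lt_abs_indicatorSum_iff ha hE ht).2 ⟨k, hxk, hj.trans_le (hant (Nat.lt_succ_iff.1 hk))⟩

lemma mem_setOf_lt_abs_indicatorSum_iff {Y : Type*} {R : Set X → Set Y} (hR : Monotone R)
    (ha : ∀ j, 0 < a j) (hE : Pairwise (Disjoint on E)) (hant : Antitone a) {j : Fin N} {y : Y}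
    (hy : y ∈ R (partialUnion E (j + 1)) \ R (partialUnion E j)) {t : ℝ} (ht : 0 < t) :
    y ∈ R {x | t < |indicatorSum a E x|} ↔ t < a j :=
  ⟨fun hyt => lt_of_not_ge fun hj =>
      hy.2 (hR (setOf_lt_abs_indicatorSum_subset_of_le ha hE hant ht.le hj) hyt),
    fun hj => hR (partialUnion_succ_subset_setOf_lt_abs_indicatorSum ha hE hant ht.le hj) hy.1⟩

end SimpleFunction

theorem stmt1_general {X Y : Type*} [MeasurableSpace Y]
    (ν : Measure Y) (R : Set X → Set Y)
    (hRmono : ∀ E F : Set X, E ⊆ F → R E ⊆ R F) (hR0 : ν (R ∅) = 0)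
    (N : ℕ) (a : Fin N → ℝ) (ha : ∀ j, 0 < a j)
    (haanti : ∀ i j : Fin N, i < j → a j < a i)
    (E : Fin N → Set X)
    (hEdisj : ∀ i j : Fin N, i ≠ j → Disjoint (E i) (E j))
    (F : ℕ → Set X)
    (hF : ∀ m : ℕ, F m = ⋃ (k : Fin N) (_ : (k : ℕ) < m), E k) :
    ∀ᵐ y ∂ν,
      rearr R (fun x => ∑ j, a j * (E j).indicator (fun _ => (1 : ℝ)) x) y
        = ∑ j : Fin N,
            ENNReal.ofReal (a j) *
              (R (F ((j : ℕ) + 1)) \ R (F (j : ℕ))).indicator (fun _ => (1 : ℝ≥0∞)) y := by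
  have hR : Monotone R := fun E F h => hRmono E F h
  have hant : Antitone a := StrictAnti.antitone fun i j h => haanti i j h
  obtain rfl : F = partialUnion E := funext hF
  have hS : Monotone fun m => R (partialUnion E m) := hR.comp partialUnion_mono
  filter_upwards [measure_eq_zero_iff_ae_notMem.mp hR0] with y hy0
  rw [← partialUnion_zero (E := E)] at hy0
  by_cases hyN : y ∈ R (partialUnion E N)
  · obtain ⟨j, hj⟩ := hS.exists_mem_sdiff hy0 hyN
    rw [hS.sum_mul_indicator_sdiff_of_mem _ hj]
    exact rearr_eq_ofReal fun t ht => mem_setOf_lt_abs_indicatorSum_iff hR ha hEdisj hant hj ht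
  · rw [hS.sum_mul_indicator_sdiff_of_notMem _ hyN, ← ENNReal.ofReal_zero]
    exact rearr_eq_ofReal fun t ht => iff_of_false
      (fun hyt => hyN (hR (setOf_lt_abs_indicatorSum_subset ha hEdisj ht.le) hyt)) ht.not_gt

theorem stmt1 {X Y : Type*} [MeasurableSpace X] [MeasurableSpace Y]
    (μ : Measure X) (ν : Measure Y) (R : Set X → Set Y)
    (hRmono : ∀ E F : Set X, E ⊆ F → R E ⊆ R F) (hR0 : ν (R ∅) = 0)
    (N : ℕ) (a : Fin N → ℝ) (ha : ∀ j, 0 < a j)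
    (haanti : ∀ i j : Fin N, i < j → a j < a i)
    (E : Fin N → Set X) (hEmeas : ∀ j, MeasurableSet (E j))
    (hEdisj : ∀ i j : Fin N, i ≠ j → Disjoint (E i) (E j))
    (F : ℕ → Set X)
    (hF : ∀ m : ℕ, F m = ⋃ (k : Fin N) (_ : (k : ℕ) < m), E k) :
    ∀ᵐ y ∂ν,
      rearr R (fun x => ∑ j, a j * (E j).indicator (fun _ => (1 : ℝ)) x) y
        = ∑ j : Fin N,
            ENNReal.ofReal (a j) *
              (R (F ((j : ℕ) + 1)) \ R (F (j : ℕ))).indicator (fun _ => (1 : ℝ≥0∞)) y :=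
  stmt1_general ν R hRmono hR0 N a ha haanti E hEdisj F hF
end

section
/- If R is a monotone set transformation, then for every measurable function f on X and every t ≥ 0, the set inclusions {y : f*_R(y) > t} ⊆ R({x : |f(x)| > t}) ⊆ {y : f*_R(y) ≥ t} hold. -/
open MeasureTheory Set Filter
open scoped ENNReal

theorem stmt3 {X Y : Type*} [MeasurableSpace X] [MeasurableSpace Y]
    (R : Set X → Set Y)
    (hRmono : ∀ E F : Set X, E ⊆ F → R E ⊆ R F)
    (f : X → ℝ) (hf : Measurable f) (t : ℝ) (ht : 0 ≤ t) :
    {y | ENNReal.ofReal t < rearr R f y} ⊆ R {x | t < |f x|} ∧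
      R {x | t < |f x|} ⊆ {y | ENNReal.ofReal t ≤ rearr R f y} := by
  have hIio : (∫⁻ s in Set.Ioi (0:ℝ), (Set.Iio t).indicator (fun _ => (1:ℝ≥0∞)) s)
      = ENNReal.ofReal t := by
    rw [lintegral_indicator measurableSet_Iio _, Measure.restrict_restrict measurableSet_Iio,
      setLIntegral_one]
    rw [Set.inter_comm, Set.Ioi_inter_Iio, Real.volume_Ioo, sub_zero]
  constructor
  · intro y hy
    by_contra hy'
    have hle : rearr R f y ≤ ENNReal.ofReal t := by
      unfold rearr
      calc ∫⁻ s in Set.Ioi (0:ℝ), (R {x | s < |f x|}).indicator (fun _ => (1:ℝ≥0∞)) y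
          ≤ ∫⁻ s in Set.Ioi (0:ℝ), (Set.Iio t).indicator (fun _ => (1:ℝ≥0∞)) s := by
            refine lintegral_mono fun s => ?_
            by_cases hs : s < t
            · have hm : s ∈ Set.Iio t := hs
              rw [Set.indicator_of_mem hm]
              exact Set.indicator_le_self _ _ y
            · have hsub : {x | s < |f x|} ⊆ {x | t < |f x|} :=
                fun x hx => lt_of_le_of_lt (not_lt.1 hs) hx
              have : y ∉ R {x | s < |f x|} := fun h => hy' (hRmono _ _ hsub h)
              simp [Set.indicator_of_notMem this]
        _ = ENNReal.ofReal t := hIio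
    exact absurd hy (not_lt.2 hle)
  · intro y hy
    have hge : ENNReal.ofReal t ≤ rearr R f y := by
      rw [← hIio]
      unfold rearr
      refine lintegral_mono fun s => ?_
      by_cases hs : s < t
      · have hsub : {x | t < |f x|} ⊆ {x | s < |f x|} :=
          fun x hx => lt_trans hs hx
        have hmem : y ∈ R {x | s < |f x|} := hRmono _ _ hsub hy
        have hm : s ∈ Set.Iio t := hs
        rw [Set.indicator_of_mem hm, Set.indicator_of_mem hmem]
      · have hm : s ∉ Set.Iio t := hs
        simp [Set.indicator_of_notMem hm]
    exact hge
end

section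
/- Suppose R satisfies the Fatou property (preserves increasing unions of measurable sets). Then the following are equivalent: (a) μ(A ∩ B) ≤ ν(R(A) ∩ R(B)) for all A, B ∈ Σ_X; (b) ∫_A f dμ ≤ ∫_{R(A)} f*_R dν for every nonnegative measurable f and every A ∈ Σ_X; (c) ∫_X f g dμ ≤ ∫_Y f*_R g*_R dν for all nonnegative measurable f, g on X (Hardy–Littlewood inequality). -/
open MeasureTheory Set Filter
open scoped ENNReal

/-!
By the layer-cake formula, `∫ f g dμ` and `∫ f* g* dν` are integrals over `t > 0` of `∫ f dμ`
over `{|g| > t}` and of `∫ f* dν` over `{g* > t}`. The Fatou property makes the level sets of the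
rearrangement exactly the images `{g* > t} = R {|g| > t}`: a point of `R {|g| > t}` already lies in
some `R {|g| > s}` with `s > t`. Hence (a) gives (b) and (b) gives (c) level by level, and the
converses follow by testing with indicators, since `(1_B)* = 1_{R B}` off the null set `R ∅`.
-/

theorem lintegral_eq_lintegral_meas_ofReal_lt {Z : Type*} [MeasurableSpace Z] (ρ : Measure Z)
    {H : Z → ℝ≥0∞} (hH : Measurable H) :
    ∫⁻ z, H z ∂ρ = ∫⁻ t in Ioi 0, ρ {z | ENNReal.ofReal t < H z} := by
  by_cases htop : ρ {z | H z = ∞} = 0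
  · have hfin : ∀ᵐ z ∂ρ, H z ≠ ∞ := measure_eq_zero_iff_ae_notMem.1 htop
    calc ∫⁻ z, H z ∂ρ = ∫⁻ z, ENNReal.ofReal (H z).toReal ∂ρ :=
          lintegral_congr_ae (hfin.mono fun z hz => (ENNReal.ofReal_toReal hz).symm)
      _ = ∫⁻ t in Ioi 0, ρ {z | t < (H z).toReal} := lintegral_eq_lintegral_meas_lt ρ
          (.of_forall fun _ => ENNReal.toReal_nonneg) hH.ennreal_toReal.aemeasurable
      _ = ∫⁻ t in Ioi 0, ρ {z | ENNReal.ofReal t < H z} :=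
          setLIntegral_congr_fun measurableSet_Ioi fun t ht => measure_congr <|
            eventuallyEq_set.2 <| hfin.mono fun z hz =>
              (ENNReal.ofReal_lt_iff_lt_toReal ht.le hz).symm
  · rw [lintegral_eq_top_of_measure_eq_top_ne_zero hH.aemeasurable htop, eq_comm, eq_top_iff]
    calc ∞ = ∫⁻ _ in Ioi (0 : ℝ), ρ {z | H z = ∞} := by
          rw [setLIntegral_const, Real.volume_Ioi, ENNReal.mul_top htop]
      _ ≤ ∫⁻ t in Ioi 0, ρ {z | ENNReal.ofReal t < H z} :=
          lintegral_mono fun t => measure_mono fun z (hz : H z = ∞) => by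
            simp [mem_ofPred_eq, hz]

theorem lintegral_mul_eq_lintegral_setLIntegral_ofReal_lt {Z : Type*} [MeasurableSpace Z]
    (ρ : Measure Z) {F H : Z → ℝ≥0∞} (hF : Measurable F) (hH : Measurable H) :
    ∫⁻ z, F z * H z ∂ρ = ∫⁻ t in Ioi 0, ∫⁻ z in {z | ENNReal.ofReal t < H z}, F z ∂ρ := by
  calc ∫⁻ z, F z * H z ∂ρ = ∫⁻ z, H z ∂ρ.withDensity F :=
        (lintegral_withDensity_eq_lintegral_mul ρ hF hH).symm
    _ = _ := lintegral_eq_lintegral_meas_ofReal_lt _ hH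
    _ = _ := lintegral_congr fun t => withDensity_apply F (hH measurableSet_Ioi)

namespace Rearrangement

variable {X Y : Type*}

def HasFatouProperty (R : Set X → Set Y) : Prop :=
  ∀ A : ℕ → Set X, Monotone A → R (⋃ j, A j) = ⋃ j, R (A j)

theorem HasFatouProperty.id : HasFatouProperty (id : Set X → Set X) := fun _ _ => rfl

theorem HasFatouProperty.monotone {R : Set X → Set Y} (hR : HasFatouProperty R) :
    Monotone R := by
  intro E F hEF
  set A : ℕ → Set X := fun j => if j = 0 then E else F
  have hA : Monotone A := monotone_nat_of_le_succ fun j => by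
    rcases j with _ | j <;> simp [A, hEF]
  have hUnion : ⋃ j, A j = F :=
    (iUnion_subset fun j => by by_cases hj : j = 0 <;> simp [A, hj, hEF]).antisymm
      (subset_iUnion A 1)
  calc R E = R (A 0) := rfl
    _ ⊆ ⋃ j, R (A j) := subset_iUnion (fun j => R (A j)) 0
    _ = R F := by rw [← hR A hA, hUnion]

theorem HasFatouProperty.exists_lt_of_mem {R : Set X → Set Y} (hR : HasFatouProperty R)
    {g : X → ℝ} {t : ℝ} {y : Y} (hy : y ∈ R {x | t < g x}) :
    ∃ s, t < s ∧ y ∈ R {x | s < g x} := by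
  set A : ℕ → Set X := fun n => {x | t + 1 / (n + 1) < g x}
  have hA : Monotone A := fun m n hmn x hx =>
    lt_of_le_of_lt (add_le_add_right (Nat.one_div_le_one_div hmn) t) hx
  have hUnion : ⋃ n, A n = {x | t < g x} := by
    ext x
    simp only [A, mem_iUnion, mem_ofPred_eq]
    constructor
    · rintro ⟨n, hn⟩
      exact (lt_add_of_pos_right t Nat.one_div_pos_of_nat).trans hn
    · intro hx
      obtain ⟨n, hn⟩ := exists_nat_one_div_lt (sub_pos.mpr hx)
      exact ⟨n, by linarith⟩
  rw [← hUnion, hR A hA, mem_iUnion] at hy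
  obtain ⟨n, hn⟩ := hy
  exact ⟨_, lt_add_of_pos_right t Nat.one_div_pos_of_nat, hn⟩

variable {R : Set X → Set Y} {f : X → ℝ} {y : Y} {s : ℝ}

theorem ofReal_le_rearr (h : ∀ t ∈ Ioo 0 s, y ∈ R {x | t < |f x|}) :
    ENNReal.ofReal s ≤ rearr R f y :=
  calc ENNReal.ofReal s = ∫⁻ _ in Ioo 0 s, 1 := by
        rw [setLIntegral_one, Real.volume_Ioo, sub_zero]
    _ ≤ ∫⁻ t in Ioo 0 s, (R {x | t < |f x|}).indicator 1 y :=
        setLIntegral_mono' measurableSet_Ioo fun t ht => by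
          rw [indicator_of_mem (h t ht)]; rfl
    _ ≤ rearr R f y := lintegral_mono_set Ioo_subset_Ioi_self

theorem rearr_le_ofReal (h : ∀ t, 0 < t → y ∈ R {x | t < |f x|} → t < s) :
    rearr R f y ≤ ENNReal.ofReal s :=
  calc rearr R f y ≤ ∫⁻ t in Ioi 0, (Ioo 0 s).indicator 1 t :=
        setLIntegral_mono' measurableSet_Ioi fun t ht => by
          by_cases hy : y ∈ R {x | t < |f x|}
          · have hts : t ∈ Ioo 0 s := ⟨ht, h t ht hy⟩
            rw [indicator_of_mem hy, indicator_of_mem hts]; rfl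
          · rw [indicator_of_notMem hy]; exact zero_le
    _ ≤ ∫⁻ t, (Ioo 0 s).indicator 1 t := setLIntegral_le_lintegral _ _
    _ = ENNReal.ofReal s := by
        rw [lintegral_indicator_one measurableSet_Ioo, Real.volume_Ioo, sub_zero]

-- This lets every identity below for `rearr R` on `Y` serve for `f` on `X`, as the case `R = id`.
theorem rearr_id_of_nonneg {f : X → ℝ} (hf : ∀ x, 0 ≤ f x) :
    rearr id f = fun x => ENNReal.ofReal (f x) := by
  funext x
  refine le_antisymm (rearr_le_ofReal fun t _ ht => ?_) (ofReal_le_rearr fun t ht => ?_)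
  · rwa [← abs_of_nonneg (hf x)]
  · simpa [abs_of_nonneg (hf x)] using ht.2

theorem HasFatouProperty.setOf_ofReal_lt_rearr (hR : HasFatouProperty R) {t : ℝ} (ht : 0 ≤ t) :
    {y | ENNReal.ofReal t < rearr R f y} = R {x | t < |f x|} := by
  ext y
  constructor
  · intro hy
    by_contra hyR
    refine hy.not_ge (rearr_le_ofReal fun s _ hs => lt_of_not_ge fun hts => hyR ?_)
    exact hR.monotone (fun x hx => lt_of_le_of_lt hts hx) hs
  · intro hy
    obtain ⟨s, hts, hs⟩ := hR.exists_lt_of_mem hy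
    calc ENNReal.ofReal t < ENNReal.ofReal s :=
          (ENNReal.ofReal_lt_ofReal_iff (ht.trans_lt hts)).2 hts
      _ ≤ rearr R f y := ofReal_le_rearr fun u hu => hR.monotone (fun x hx => hu.2.trans hx) hs

theorem HasFatouProperty.measurable_rearr [MeasurableSpace X] [MeasurableSpace Y]
    (hR : HasFatouProperty R) (hRmeas : ∀ A : Set X, MeasurableSet A → MeasurableSet (R A))
    (hf : Measurable f) : Measurable (rearr R f) := by
  have hgraph : {p : Y × ℝ | p.1 ∈ R {x | p.2 < |f x|}} =
      ⋃ q : ℚ, R {x | (q : ℝ) < |f x|} ×ˢ Iio (q : ℝ) := by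
    ext ⟨y, t⟩
    simp only [mem_ofPred_eq, mem_iUnion, mem_prod, mem_Iio]
    constructor
    · intro hy
      obtain ⟨s, hts, hs⟩ := hR.exists_lt_of_mem hy
      obtain ⟨q, htq, hqs⟩ := exists_rat_btwn hts
      exact ⟨q, hR.monotone (fun x hx => hqs.trans hx) hs, htq⟩
    · rintro ⟨q, hq, htq⟩
      exact hR.monotone (fun x hx => htq.trans hx) hq
  have hmeas : MeasurableSet {p : Y × ℝ | p.1 ∈ R {x | p.2 < |f x|}} := hgraph ▸
    .iUnion fun q => (hRmeas _ (measurableSet_lt measurable_const hf.abs)).prod measurableSet_Iio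
  exact (measurable_const.indicator hmeas).lintegral_prod_right'

theorem setOf_lt_abs_indicator_one_of_lt (A : Set X) {t : ℝ} (ht₀ : 0 ≤ t) (ht₁ : t < 1) :
    {x | t < |A.indicator (1 : X → ℝ) x|} = A := by
  ext x
  by_cases hx : x ∈ A <;> simp [hx, ht₁, ht₀]

theorem setOf_lt_abs_indicator_one_of_le (A : Set X) {t : ℝ} (ht : 1 ≤ t) :
    {x | t < |A.indicator (1 : X → ℝ) x|} = ∅ := by
  ext x
  by_cases hx : x ∈ A <;> simp [hx, ht, (zero_le_one.trans ht)]

theorem rearr_indicator_one_of_notMem (hR : Monotone R) {A : Set X} (hy : y ∉ R ∅) :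
    rearr R (A.indicator 1) y = (R A).indicator 1 y := by
  by_cases hyA : y ∈ R A
  · rw [indicator_of_mem hyA]
    refine le_antisymm ?_ ?_
    · simpa using rearr_le_ofReal (s := 1) fun t _ ht => lt_of_not_ge fun h1 =>
        hy (by rwa [setOf_lt_abs_indicator_one_of_le A h1] at ht)
    · simpa using ofReal_le_rearr (s := 1) fun t ht => by
        rwa [setOf_lt_abs_indicator_one_of_lt A ht.1.le ht.2]
  · rw [indicator_of_notMem hyA]
    have hsub : ∀ t, 0 < t → R {x | t < |A.indicator (1 : X → ℝ) x|} ⊆ R A := fun t ht₀ => by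
      rcases lt_or_ge t 1 with ht₁ | ht₁
      · rw [setOf_lt_abs_indicator_one_of_lt A ht₀.le ht₁]
      · rw [setOf_lt_abs_indicator_one_of_le A ht₁]
        exact hR (empty_subset A)
    simpa using rearr_le_ofReal (s := 0) fun t ht₀ ht => absurd (hsub t ht₀ ht) hyA

section Integrals

variable [MeasurableSpace Y] {ν : Measure Y}

theorem rearr_indicator_one_ae (hR : Monotone R) (hR0 : ν (R ∅) = 0) (A : Set X) :
    rearr R (A.indicator 1) =ᵐ[ν] (R A).indicator 1 :=
  (measure_eq_zero_iff_ae_notMem.1 hR0).mono fun _ hy => rearr_indicator_one_of_notMem hR hy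

theorem lintegral_mul_rearr_indicator_one (hR : Monotone R) (hR0 : ν (R ∅) = 0) {A : Set X}
    (hA : MeasurableSet (R A)) (F : Y → ℝ≥0∞) :
    ∫⁻ y, F y * rearr R (A.indicator 1) y ∂ν = ∫⁻ y in R A, F y ∂ν := by
  rw [← lintegral_indicator hA]
  refine lintegral_congr_ae ((rearr_indicator_one_ae hR hR0 A).mono fun y hy => ?_)
  simp only [hy, ← indicator_mul_right, Pi.one_apply, mul_one]

theorem setLIntegral_rearr_indicator_one (hR : Monotone R) (hR0 : ν (R ∅) = 0) {A : Set X}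
    (hA : MeasurableSet (R A)) (B : Set Y) :
    ∫⁻ y in B, rearr R (A.indicator 1) y ∂ν = ν (R A ∩ B) := by
  rw [lintegral_congr_ae (ae_restrict_of_ae (rearr_indicator_one_ae hR hR0 A)),
    lintegral_indicator_one hA, Measure.restrict_apply hA]

variable [MeasurableSpace X]

theorem HasFatouProperty.lintegral_mul_rearr
    (hR : HasFatouProperty R) (hRmeas : ∀ A : Set X, MeasurableSet A → MeasurableSet (R A))
    {F : Y → ℝ≥0∞} (hF : Measurable F) {g : X → ℝ} (hg : Measurable g) :
    ∫⁻ y, F y * rearr R g y ∂ν = ∫⁻ t in Ioi 0, ∫⁻ y in R {x | t < |g x|}, F y ∂ν := by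
  rw [lintegral_mul_eq_lintegral_setLIntegral_ofReal_lt ν hF (hR.measurable_rearr hRmeas hg)]
  exact setLIntegral_congr_fun measurableSet_Ioi fun t ht => by
    rw [hR.setOf_ofReal_lt_rearr ht.le]

theorem HasFatouProperty.setLIntegral_rearr
    (hR : HasFatouProperty R) (hRmeas : ∀ A : Set X, MeasurableSet A → MeasurableSet (R A))
    (hf : Measurable f) (B : Set Y) :
    ∫⁻ y in B, rearr R f y ∂ν = ∫⁻ t in Ioi 0, ν (R {x | t < |f x|} ∩ B) := by
  simpa [Measure.restrict_apply (hRmeas _ (measurableSet_lt measurable_const hf.abs))] using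
    hR.lintegral_mul_rearr (ν := ν.restrict B) hRmeas measurable_const hf (F := 1)

end Integrals

section Equivalence

variable [MeasurableSpace X] [MeasurableSpace Y]

def InterMeasureLe (μ : Measure X) (ν : Measure Y) (R : Set X → Set Y) : Prop :=
  ∀ A B : Set X, MeasurableSet A → MeasurableSet B → μ (A ∩ B) ≤ ν (R A ∩ R B)

def SetLIntegralLe (μ : Measure X) (ν : Measure Y) (R : Set X → Set Y) : Prop :=
  ∀ (f : X → ℝ), Measurable f → (∀ x, 0 ≤ f x) → ∀ A : Set X, MeasurableSet A →
    ∫⁻ x in A, ENNReal.ofReal (f x) ∂μ ≤ ∫⁻ y in R A, rearr R f y ∂ν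

def HardyLittlewood (μ : Measure X) (ν : Measure Y) (R : Set X → Set Y) : Prop :=
  ∀ (f g : X → ℝ), Measurable f → Measurable g → (∀ x, 0 ≤ f x) → (∀ x, 0 ≤ g x) →
    ∫⁻ x, ENNReal.ofReal (f x) * ENNReal.ofReal (g x) ∂μ ≤ ∫⁻ y, rearr R f y * rearr R g y ∂ν

variable {μ : Measure X} {ν : Measure Y}

theorem InterMeasureLe.setLIntegralLe
    (hRmeas : ∀ A : Set X, MeasurableSet A → MeasurableSet (R A)) (hR : HasFatouProperty R)
    (h : InterMeasureLe μ ν R) :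
    SetLIntegralLe μ ν R := by
  intro f hf hf0 A hA
  rw [← rearr_id_of_nonneg hf0, HasFatouProperty.id.setLIntegral_rearr (fun _ => id) hf,
    hR.setLIntegral_rearr hRmeas hf]
  exact lintegral_mono fun t => h _ A (measurableSet_lt measurable_const hf.abs) hA

theorem SetLIntegralLe.interMeasureLe
    (hRmeas : ∀ A : Set X, MeasurableSet A → MeasurableSet (R A)) (hR : Monotone R)
    (hR0 : ν (R ∅) = 0)     (h : SetLIntegralLe μ ν R) : InterMeasureLe μ ν R := by
  intro A B hA hB
  have hB₀ : ∀ x, 0 ≤ B.indicator (1 : X → ℝ) x := indicator_nonneg fun _ _ => zero_le_one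
  have key := h _ (measurable_one.indicator hB) hB₀ A hA
  rw [← rearr_id_of_nonneg hB₀, setLIntegral_rearr_indicator_one monotone_id measure_empty hB,
    setLIntegral_rearr_indicator_one hR hR0 (hRmeas B hB)] at key
  rw [inter_comm A, inter_comm (R A)]
  exact key

theorem SetLIntegralLe.hardyLittlewood
    (hRmeas : ∀ A : Set X, MeasurableSet A → MeasurableSet (R A)) (hR : HasFatouProperty R)
    (h : SetLIntegralLe μ ν R) :
    HardyLittlewood μ ν R := by
  intro f g hf hg hf0 hg0
  calc ∫⁻ x, ENNReal.ofReal (f x) * ENNReal.ofReal (g x) ∂μ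
      = ∫⁻ x, ENNReal.ofReal (f x) * rearr id g x ∂μ := by rw [rearr_id_of_nonneg hg0]
    _ = ∫⁻ t in Ioi 0, ∫⁻ x in {x | t < |g x|}, ENNReal.ofReal (f x) ∂μ :=
        HasFatouProperty.id.lintegral_mul_rearr (fun _ => id) hf.ennreal_ofReal hg
    _ ≤ ∫⁻ t in Ioi 0, ∫⁻ y in R {x | t < |g x|}, rearr R f y ∂ν :=
        lintegral_mono fun t => h f hf hf0 _ (measurableSet_lt measurable_const hg.abs)
    _ = ∫⁻ y, rearr R f y * rearr R g y ∂ν :=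
        (hR.lintegral_mul_rearr hRmeas (hR.measurable_rearr hRmeas hf) hg).symm

theorem HardyLittlewood.setLIntegralLe
    (hRmeas : ∀ A : Set X, MeasurableSet A → MeasurableSet (R A)) (hR : Monotone R)
    (hR0 : ν (R ∅) = 0)     (h : HardyLittlewood μ ν R) : SetLIntegralLe μ ν R := by
  intro f hf hf0 A hA
  have hA₀ : ∀ x, 0 ≤ A.indicator (1 : X → ℝ) x := indicator_nonneg fun _ _ => zero_le_one
  calc ∫⁻ x in A, ENNReal.ofReal (f x) ∂μ
      = ∫⁻ x, ENNReal.ofReal (f x) * rearr id (A.indicator 1) x ∂μ :=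
        (lintegral_mul_rearr_indicator_one monotone_id measure_empty hA _).symm
    _ = ∫⁻ x, ENNReal.ofReal (f x) * ENNReal.ofReal (A.indicator 1 x) ∂μ := by
        rw [rearr_id_of_nonneg hA₀]
    _ ≤ ∫⁻ y, rearr R f y * rearr R (A.indicator 1) y ∂ν :=
        h f _ hf (measurable_one.indicator hA) hf0 hA₀
    _ = ∫⁻ y in R A, rearr R f y ∂ν := lintegral_mul_rearr_indicator_one hR hR0 (hRmeas A hA) _

end Equivalence

end Rearrangement

open Rearrangement

theorem stmt7_general {X Y : Type*} [MeasurableSpace X] [MeasurableSpace Y]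
    (μ : Measure X) (ν : Measure Y) (R : Set X → Set Y)
    (hR0 : ν (R ∅) = 0)
    (hRmeas : ∀ A : Set X, MeasurableSet A → MeasurableSet (R A))
    (hRunion : ∀ A : ℕ → Set X, Monotone A → R (⋃ j, A j) = ⋃ j, R (A j)) :
    ((∀ A B : Set X, MeasurableSet A → MeasurableSet B →
        μ (A ∩ B) ≤ ν (R A ∩ R B)) ↔
      (∀ (f : X → ℝ), Measurable f → (∀ x, 0 ≤ f x) →
        ∀ A : Set X, MeasurableSet A →
          ∫⁻ x in A, ENNReal.ofReal (f x) ∂μ ≤ ∫⁻ y in R A, rearr R f y ∂ν)) ∧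
    ((∀ (f : X → ℝ), Measurable f → (∀ x, 0 ≤ f x) →
        ∀ A : Set X, MeasurableSet A →
          ∫⁻ x in A, ENNReal.ofReal (f x) ∂μ ≤ ∫⁻ y in R A, rearr R f y ∂ν) ↔
      (∀ (f g : X → ℝ), Measurable f → Measurable g →
        (∀ x, 0 ≤ f x) → (∀ x, 0 ≤ g x) →
          ∫⁻ x, ENNReal.ofReal (f x) * ENNReal.ofReal (g x) ∂μ
            ≤ ∫⁻ y, rearr R f y * rearr R g y ∂ν)) := by
  have hR : HasFatouProperty R := hRunion
  exact ⟨⟨InterMeasureLe.setLIntegralLe hRmeas hR,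
      SetLIntegralLe.interMeasureLe hRmeas hR.monotone hR0⟩,
    ⟨SetLIntegralLe.hardyLittlewood hRmeas hR,
      HardyLittlewood.setLIntegralLe hRmeas hR.monotone hR0⟩⟩

theorem stmt7 {X Y : Type*} [MeasurableSpace X] [MeasurableSpace Y]
    (μ : Measure X) (ν : Measure Y) (R : Set X → Set Y)
    (hR0 : ν (R ∅) = 0)
    (hRmeas : ∀ A : Set X, MeasurableSet A → MeasurableSet (R A))
    (hRunion : ∀ A : ℕ → Set X, Monotone A → R (⋃ j, A j) = ⋃ j, R (A j))
    (hRmono : ∀ E F : Set X, E ⊆ F → R E ⊆ R F) :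
    ((∀ A B : Set X, MeasurableSet A → MeasurableSet B →
        μ (A ∩ B) ≤ ν (R A ∩ R B)) ↔
      (∀ (f : X → ℝ), Measurable f → (∀ x, 0 ≤ f x) →
        ∀ A : Set X, MeasurableSet A →
          ∫⁻ x in A, ENNReal.ofReal (f x) ∂μ ≤ ∫⁻ y in R A, rearr R f y ∂ν)) ∧
    ((∀ (f : X → ℝ), Measurable f → (∀ x, 0 ≤ f x) →
        ∀ A : Set X, MeasurableSet A →
          ∫⁻ x in A, ENNReal.ofReal (f x) ∂μ ≤ ∫⁻ y in R A, rearr R f y ∂ν) ↔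
      (∀ (f g : X → ℝ), Measurable f → Measurable g →
        (∀ x, 0 ≤ f x) → (∀ x, 0 ≤ g x) →
          ∫⁻ x, ENNReal.ofReal (f x) * ENNReal.ofReal (g x) ∂μ
            ≤ ∫⁻ y, rearr R f y * rearr R g y ∂ν)) :=
  stmt7_general μ ν R hR0 hRmeas hRunion
end

section
/- Let 1 ≤ p < ∞, R satisfy the Fatou property, and v be a weight on Y. If ‖·‖_{Λ^p_R(v)} is a norm (in particular satisfies the triangle inequality), then the concavity condition V(R(A ∪ B)) + V(R(A ∩ B)) ≤ V(R(A)) + V(R(B)) holds for all measurable sets A, B ⊆ X, where V(E) = ∫_E v dν. -/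
open MeasureTheory Set Filter
open scoped ENNReal NNReal

/-- The Lorentz space functional `‖f‖_{Λ^p_R(v)} = (∫_Y (f*_R)^p v dν)^{1/p}`. -/
noncomputable def lorentzNorm {X Y : Type*} [MeasurableSpace Y]
    (R : Set X → Set Y) (ν : Measure Y) (v : Y → ℝ≥0∞) (p : ℝ) (f : X → ℝ) : ℝ≥0∞ :=
  (∫⁻ y, rearr R f y ^ p * v y ∂ν) ^ (1 / p)

/-!
Test the triangle inequality on the two-level functions
`f_ε = 1_A + (1 - ε) 1_{(A ∪ B) \ A}` and `g_ε = 1_B + (1 - ε) 1_{(A ∪ B) \ B}`, whose sum is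
`2 · 1_{A ∩ B} + (2 - ε) 1_{(A ∪ B) \ (A ∩ B)}`. Off `R ∅`, the rearrangement of
`r 1_S + s 1_{U \ S}` is `s 1_{R U} + (r - s) 1_{R S}`, so all three norms are explicit in
`V(R A)`, `V(R B)`, `V(R (A ∩ B))` and `V(R (A ∪ B))`. The defect
`‖f_ε‖ + ‖g_ε‖ - ‖f_ε + g_ε‖` is nonnegative for `ε > 0` and vanishes at `ε = 0`, so its
derivative at `0`, a positive multiple of `V(R A) + V(R B) - V(R (A ∪ B)) - V(R (A ∩ B))`, is
nonnegative. When `V(R (A ∪ B)) = ∞`, the triangle inequality for `1_A + 1_{B \ A}` instead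
forces `V(R A)` or `V(R B)` to be infinite.
-/

open Topology

lemma HasDerivAt.nonneg_of_eventually_ge_nhdsGT {F : ℝ → ℝ} {F' x : ℝ} (hF : HasDerivAt F F' x)
    (hmin : ∀ᶠ y in 𝓝[>] x, F x ≤ F y) : 0 ≤ F' := by
  refine ge_of_tendsto (hasDerivAt_iff_tendsto_slope.mp hF |>.mono_left (nhdsGT_le_nhdsNE x)) ?_
  filter_upwards [hmin, self_mem_nhdsWithin] with y hFy hxy
  rw [slope_def_field]
  exact div_nonneg (sub_nonneg.mpr hFy) (sub_nonneg.mpr (le_of_lt hxy))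

lemma rpow_mul_add_rpow_mul_rpow_one_div {p k c d : ℝ} (hp : p ≠ 0) (hk : 0 ≤ k)
    (hcd : 0 ≤ c + d) : (k ^ p * c + k ^ p * d) ^ (1 / p) = k * (c + d) ^ (1 / p) := by
  rw [← mul_add, Real.mul_rpow (Real.rpow_nonneg hk p) hcd, one_div, Real.rpow_rpow_inv hk hp]

lemma hasDerivAt_rpow_mul_add_sub_rpow_mul {p k c d : ℝ} (hp : p ≠ 0) (hk : 0 < k)
    (hcd : 0 < c + d) :
    HasDerivAt (fun ε => (k ^ p * c + (k - ε) ^ p * d) ^ (1 / p))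
      (-(d * (c + d) ^ (1 / p - 1))) 0 := by
  have hsub : HasDerivAt (fun ε : ℝ => (k - ε) ^ p) (-(p * k ^ (p - 1))) 0 := by
    simpa using ((hasDerivAt_id (0 : ℝ)).const_sub k).rpow_const (p := p)
      (Or.inl (by simpa using hk.ne'))
  have hbase : k ^ p * c + (k - 0) ^ p * d = k ^ p * (c + d) := by ring_nf
  have := ((hsub.mul_const d).const_add (k ^ p * c)).rpow_const (p := 1 / p)
    (Or.inl (by rw [hbase]; positivity))
  convert this using 1
  -- the chain-rule factor `k ^ (p - 1)` cancels against `(k ^ p) ^ (1 / p - 1) = k ^ (1 - p)`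
  have hexp : p * (1 / p - 1) = 1 - p := by field_simp
  have hk' : k ^ (p - 1) * k ^ (1 - p) = 1 := by
    rw [← Real.rpow_add hk]; simp
  rw [hbase, Real.mul_rpow (by positivity) hcd.le, ← Real.rpow_mul hk.le, hexp]
  linear_combination (p * (1 / p) * d * (c + d) ^ (1 / p - 1)) * hk'
    + (d * (c + d) ^ (1 / p - 1)) * mul_one_div_cancel hp

lemma add_le_add_of_forall_perturbed_rpow_triangle {p a b i da db di u : ℝ} (hp : p ≠ 0)
    (hu : 0 < u) (ha : a + da = u) (hb : b + db = u) (hi : i + di = u)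
    (H : ∀ ε ∈ Ioo (0 : ℝ) 1, (2 ^ p * i + (2 - ε) ^ p * di) ^ (1 / p)
        ≤ (1 ^ p * a + (1 - ε) ^ p * da) ^ (1 / p) + (1 ^ p * b + (1 - ε) ^ p * db) ^ (1 / p)) :
    u + i ≤ a + b := by
  set F : ℝ → ℝ := fun ε => (1 ^ p * a + (1 - ε) ^ p * da) ^ (1 / p)
    + (1 ^ p * b + (1 - ε) ^ p * db) ^ (1 / p) - (2 ^ p * i + (2 - ε) ^ p * di) ^ (1 / p)
  have hF : HasDerivAt F
      (-(da * u ^ (1 / p - 1)) + -(db * u ^ (1 / p - 1)) - -(di * u ^ (1 / p - 1))) 0 := by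
    have := ((hasDerivAt_rpow_mul_add_sub_rpow_mul hp one_pos (ha ▸ hu)).add
      (hasDerivAt_rpow_mul_add_sub_rpow_mul hp one_pos (hb ▸ hu))).sub
      (hasDerivAt_rpow_mul_add_sub_rpow_mul hp two_pos (hi ▸ hu))
    rwa [ha, hb, hi] at this
  have hF0 : F 0 = 0 := by
    simp only [F, sub_zero]
    rw [rpow_mul_add_rpow_mul_rpow_one_div hp zero_le_one (ha ▸ hu.le),
      rpow_mul_add_rpow_mul_rpow_one_div hp zero_le_one (hb ▸ hu.le),
      rpow_mul_add_rpow_mul_rpow_one_div hp zero_le_two (hi ▸ hu.le), ha, hb, hi]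
    ring
  have hmin : ∀ᶠ ε in 𝓝[>] 0, F 0 ≤ F ε := by
    filter_upwards [Ioo_mem_nhdsGT one_pos] with ε hε
    rw [hF0]
    exact sub_nonneg.mpr (H ε hε)
  have hderiv := hF.nonneg_of_eventually_ge_nhdsGT hmin
  have hq : 0 < u ^ (1 / p - 1) := Real.rpow_pos_of_pos hu _
  nlinarith

lemma monotone_of_map_iUnion_eq {X Y : Type*} {R : Set X → Set Y}
    (hR : ∀ A : ℕ → Set X, Monotone A → R (⋃ j, A j) = ⋃ j, R (A j)) : Monotone R := by
  intro S T hST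
  have hA : Monotone fun j : ℕ => if j = 0 then S else T := by
    intro m n hmn
    dsimp only
    split_ifs <;> first | rfl | exact hST | omega
  have hT : (⋃ j : ℕ, if j = 0 then S else T) = T := by
    refine subset_antisymm (iUnion_subset fun j => ?_) (subset_iUnion_of_subset 1 (by simp))
    split_ifs
    exacts [hST, subset_rfl]
  rw [← hT, hR _ hA]
  exact subset_iUnion_of_subset 0 (by simp)

lemma setLIntegral_add_sdiff_of_subset {α : Type*} [MeasurableSpace α] {μ : Measure α}
    {f : α → ℝ≥0∞} {s t : Set α} (hst : s ⊆ t) (hs : MeasurableSet s) :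
    ∫⁻ x in s, f x ∂μ + ∫⁻ x in t \ s, f x ∂μ = ∫⁻ x in t, f x ∂μ := by
  simpa [inter_eq_right.2 hst] using lintegral_inter_add_sdiff f t hs

lemma toReal_setLIntegral_add_sdiff_of_subset {α : Type*} [MeasurableSpace α] {μ : Measure α}
    {f : α → ℝ≥0∞} {s t : Set α} (hst : s ⊆ t) (hs : MeasurableSet s)
    (ht : ∫⁻ x in t, f x ∂μ ≠ ⊤) :
    (∫⁻ x in s, f x ∂μ).toReal + (∫⁻ x in t \ s, f x ∂μ).toReal = (∫⁻ x in t, f x ∂μ).toReal := by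
  rw [← ENNReal.toReal_add (ne_top_of_le_ne_top ht (lintegral_mono_set hst))
    (ne_top_of_le_ne_top ht (lintegral_mono_set sdiff_subset)),
    setLIntegral_add_sdiff_of_subset hst hs]

section TwoStep

variable {X Y : Type*}

noncomputable def twoStep (S U : Set X) (r s : ℝ) : X → ℝ :=
  S.indicator (fun _ => r) + (U \ S).indicator (fun _ => s)

lemma measurable_twoStep [MeasurableSpace X] {S U : Set X} (hS : MeasurableSet S)
    (hU : MeasurableSet U) (r s : ℝ) : Measurable (twoStep S U r s) :=
  (measurable_const.indicator hS).add (measurable_const.indicator (hU.diff hS))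

lemma twoStep_self_zero (S : Set X) (r : ℝ) : twoStep S S r 0 = S.indicator fun _ => r := by
  simp [twoStep]
  rfl

lemma twoStep_add_twoStep (A B : Set X) (r s : ℝ) :
    twoStep A (A ∪ B) r s + twoStep B (A ∪ B) r s = twoStep (A ∩ B) (A ∪ B) (r + r) (r + s) := by
  ext x
  by_cases hA : x ∈ A <;> by_cases hB : x ∈ B <;> simp [twoStep, hA, hB, add_comm]

lemma setOf_lt_abs_twoStep {S U : Set X} (hSU : S ⊆ U) {r s t : ℝ} (hs : 0 ≤ s) (hsr : s ≤ r)
    (ht : 0 ≤ t) :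
    {x | t < |twoStep S U r s x|} = if t < s then U else if t < r then S else ∅ := by
  ext x
  by_cases hxS : x ∈ S
  · have hxU := hSU hxS
    split_ifs <;> simp [twoStep, hxS, hxU, abs_of_nonneg (hs.trans hsr)] <;> linarith
  · by_cases hxU : x ∈ U <;> split_ifs <;> simp [twoStep, hxS, hxU, abs_of_nonneg hs] <;> linarith

lemma rearr_twoStep (R : Set X → Set Y) {S U : Set X} (hSU : S ⊆ U) {r s : ℝ} (hs : 0 ≤ s)
    (hsr : s ≤ r) {y : Y} (hy : y ∉ R ∅) :
    rearr R (twoStep S U r s) y = ENNReal.ofReal s * (R U).indicator (fun _ => 1) y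
      + ENNReal.ofReal (r - s) * (R S).indicator (fun _ => 1) y := by
  have hr : 0 ≤ r := hs.trans hsr
  set level := fun t : ℝ => (R {x | t < |twoStep S U r s x|}).indicator (fun _ => (1 : ℝ≥0∞)) y
  have hlow : EqOn level (fun _ => (R U).indicator (fun _ => 1) y) (Ico 0 s) := fun t ht => by
    simp only [level, setOf_lt_abs_twoStep hSU hs hsr ht.1, if_pos ht.2]
  have hmid : EqOn level (fun _ => (R S).indicator (fun _ => 1) y) (Ico s r) := fun t ht => by
    simp only [level, setOf_lt_abs_twoStep hSU hs hsr (hs.trans ht.1), if_neg (not_lt.2 ht.1),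
      if_pos ht.2]
  have hhigh : EqOn level 0 (Ici r) := fun t (ht : r ≤ t) => by
    simp only [level, setOf_lt_abs_twoStep hSU hs hsr (hr.trans ht),
      if_neg (not_lt.2 (hsr.trans ht)), if_neg (not_lt.2 ht), indicator_of_notMem hy,
      Pi.zero_apply]
  rw [rearr, Measure.restrict_congr_set Ioi_ae_eq_Ici, ← Ico_union_Ici_eq_Ici hr,
    lintegral_union measurableSet_Ici ((Iio_disjoint_Ici le_rfl).mono_left Ico_subset_Iio_self),
    ← Ico_union_Ico_eq_Ico hs hsr, lintegral_union measurableSet_Ico Ico_disjoint_Ico_same,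
    setLIntegral_congr_fun measurableSet_Ico hlow, setLIntegral_congr_fun measurableSet_Ico hmid,
    setLIntegral_congr_fun measurableSet_Ici hhigh]
  simp [mul_comm]

variable [MeasurableSpace Y] {R : Set X → Set Y} {ν : Measure Y} {v : Y → ℝ≥0∞} {p : ℝ}

lemma lorentzNorm_twoStep (hR0 : ν (R ∅) = 0) (hp : 0 < p) {S U : Set X} (hSU : S ⊆ U)
    (hRSU : R S ⊆ R U) (hRS : MeasurableSet (R S)) (hRU : MeasurableSet (R U)) {r s : ℝ}
    (hs : 0 ≤ s) (hsr : s ≤ r) :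
    lorentzNorm R ν v p (twoStep S U r s) = (ENNReal.ofReal r ^ p * ∫⁻ y in R S, v y ∂ν
      + ENNReal.ofReal s ^ p * ∫⁻ y in R U \ R S, v y ∂ν) ^ (1 / p) := by
  set g := fun y => (ENNReal.ofReal s * (R U).indicator (fun _ => 1) y
    + ENNReal.ofReal (r - s) * (R S).indicator (fun _ => 1) y) ^ p * v y
  have hg : ∫⁻ y, rearr R (twoStep S U r s) y ^ p * v y ∂ν = ∫⁻ y, g y ∂ν := by
    refine lintegral_congr_ae ?_
    filter_upwards [measure_eq_zero_iff_ae_notMem.mp hR0] with y hy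
    rw [rearr_twoStep R hSU hs hsr hy]
  have hgS : EqOn g (fun y => ENNReal.ofReal r ^ p * v y) (R S) := fun y hy => by
    simp only [g, indicator_of_mem hy, indicator_of_mem (hRSU hy), mul_one]
    rw [← ENNReal.ofReal_add hs (sub_nonneg.2 hsr), add_sub_cancel]
  have hgUS : EqOn g (fun y => ENNReal.ofReal s ^ p * v y) (R U \ R S) := fun y hy => by
    simp only [g, indicator_of_mem hy.1, indicator_of_notMem hy.2, mul_one, mul_zero, add_zero]
  have hgU : EqOn g 0 (R U)ᶜ := fun y hy => by
    simp only [g, indicator_of_notMem hy, indicator_of_notMem fun h => hy (hRSU h), mul_zero,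
      add_zero, ENNReal.zero_rpow_of_pos hp, zero_mul, Pi.zero_apply]
  have hfin : ∀ a : ℝ, ENNReal.ofReal a ^ p ≠ ⊤ := fun _ =>
    ENNReal.rpow_ne_top_of_nonneg hp.le ENNReal.ofReal_ne_top
  rw [lorentzNorm, hg, ← lintegral_add_compl g hRU, ← setLIntegral_add_sdiff_of_subset hRSU hRS,
    setLIntegral_congr_fun hRS hgS, setLIntegral_congr_fun (hRU.diff hRS) hgUS,
    setLIntegral_congr_fun hRU.compl hgU, lintegral_const_mul' _ _ (hfin r),
    lintegral_const_mul' _ _ (hfin s), Pi.zero_def, lintegral_zero, add_zero]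

lemma lorentzNorm_indicator_one (hR0 : ν (R ∅) = 0) (hp : 0 < p) {S : Set X}
    (hRS : MeasurableSet (R S)) :
    lorentzNorm R ν v p (S.indicator fun _ => 1) = (∫⁻ y in R S, v y ∂ν) ^ (1 / p) := by
  rw [← twoStep_self_zero, lorentzNorm_twoStep hR0 hp subset_rfl subset_rfl hRS hRS le_rfl
    zero_le_one]
  simp [ENNReal.zero_rpow_of_pos hp]

lemma lorentzNorm_twoStep_of_ne_top (hR0 : ν (R ∅) = 0) (hp : 0 < p) {S U : Set X}
    (hSU : S ⊆ U) (hRSU : R S ⊆ R U) (hRS : MeasurableSet (R S)) (hRU : MeasurableSet (R U))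
    (hfin : ∫⁻ y in R U, v y ∂ν ≠ ⊤) {r s : ℝ} (hs : 0 ≤ s) (hsr : s ≤ r) :
    lorentzNorm R ν v p (twoStep S U r s) = ENNReal.ofReal ((r ^ p * (∫⁻ y in R S, v y ∂ν).toReal
      + s ^ p * (∫⁻ y in R U \ R S, v y ∂ν).toReal) ^ (1 / p)) := by
  have hr : 0 ≤ r := hs.trans hsr
  rw [lorentzNorm_twoStep hR0 hp hSU hRSU hRS hRU hs hsr]
  conv_lhs => rw [← ENNReal.ofReal_toReal (ne_top_of_le_ne_top hfin (lintegral_mono_set hRSU)),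
    ← ENNReal.ofReal_toReal (ne_top_of_le_ne_top hfin (lintegral_mono_set sdiff_subset)),
    ENNReal.ofReal_rpow_of_nonneg hr hp.le, ENNReal.ofReal_rpow_of_nonneg hs hp.le,
    ← ENNReal.ofReal_mul (by positivity), ← ENNReal.ofReal_mul (by positivity),
    ← ENNReal.ofReal_add (by positivity) (by positivity),
    ENNReal.ofReal_rpow_of_nonneg (by positivity) (by positivity)]

end TwoStep

section Concavity

variable {X Y : Type*} [MeasurableSpace X] [MeasurableSpace Y] {R : Set X → Set Y}
  {ν : Measure Y} {v : Y → ℝ≥0∞} {p : ℝ}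

lemma setLIntegral_add_eq_top_of_union_eq_top (hR0 : ν (R ∅) = 0)
    (hRmeas : ∀ A : Set X, MeasurableSet A → MeasurableSet (R A)) (hRmono : Monotone R)
    (hp : 0 < p)
    (htriangle : ∀ f g : X → ℝ, Measurable f → Measurable g →
      lorentzNorm R ν v p (f + g) ≤ lorentzNorm R ν v p f + lorentzNorm R ν v p g)
    {A B : Set X} (hA : MeasurableSet A) (hB : MeasurableSet B)
    (hU : ∫⁻ y in R (A ∪ B), v y ∂ν = ⊤) :
    (∫⁻ y in R A, v y ∂ν) + ∫⁻ y in R B, v y ∂ν = ⊤ := by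
  have hsum : (A.indicator fun _ => (1 : ℝ)) + (B \ A).indicator (fun _ => 1)
      = (A ∪ B).indicator fun _ => 1 := by
    rw [← union_sdiff_self, indicator_union_of_disjoint disjoint_sdiff_right]
    rfl
  have htr := htriangle (A.indicator fun _ => 1) ((B \ A).indicator fun _ => 1)
    (measurable_const.indicator hA) (measurable_const.indicator (hB.diff hA))
  rw [hsum, lorentzNorm_indicator_one hR0 hp (hRmeas _ (hA.union hB)),
    lorentzNorm_indicator_one hR0 hp (hRmeas _ hA),
    lorentzNorm_indicator_one hR0 hp (hRmeas _ (hB.diff hA)), hU,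
    ENNReal.top_rpow_of_pos (by positivity), top_le_iff, ENNReal.add_eq_top,
    ENNReal.rpow_eq_top_iff_of_pos (by positivity),
    ENNReal.rpow_eq_top_iff_of_pos (by positivity)] at htr
  rcases htr with hAtop | hBAtop
  · simp [hAtop]
  · simp [top_le_iff.1 (hBAtop ▸ lintegral_mono_set (hRmono sdiff_subset))]

lemma perturbed_triangle_of_ne_top (hR0 : ν (R ∅) = 0)
    (hRmeas : ∀ A : Set X, MeasurableSet A → MeasurableSet (R A)) (hRmono : Monotone R)
    (hp : 0 < p)
    (htriangle : ∀ f g : X → ℝ, Measurable f → Measurable g →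
      lorentzNorm R ν v p (f + g) ≤ lorentzNorm R ν v p f + lorentzNorm R ν v p g)
    {A B : Set X} (hA : MeasurableSet A) (hB : MeasurableSet B)
    (hU : ∫⁻ y in R (A ∪ B), v y ∂ν ≠ ⊤) {ε : ℝ} (hε : ε ∈ Ioo (0 : ℝ) 1) :
    (2 ^ p * (∫⁻ y in R (A ∩ B), v y ∂ν).toReal
        + (2 - ε) ^ p * (∫⁻ y in R (A ∪ B) \ R (A ∩ B), v y ∂ν).toReal) ^ (1 / p)
      ≤ (1 ^ p * (∫⁻ y in R A, v y ∂ν).toReal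
          + (1 - ε) ^ p * (∫⁻ y in R (A ∪ B) \ R A, v y ∂ν).toReal) ^ (1 / p)
        + (1 ^ p * (∫⁻ y in R B, v y ∂ν).toReal
          + (1 - ε) ^ p * (∫⁻ y in R (A ∪ B) \ R B, v y ∂ν).toReal) ^ (1 / p) := by
  obtain ⟨hε0, hε1⟩ := hε
  have h1ε : 0 ≤ 1 - ε := by linarith
  have hUm : MeasurableSet (A ∪ B) := hA.union hB
  have hnorm {S : Set X} (hSU : S ⊆ A ∪ B) (hS : MeasurableSet S) {r s : ℝ} (hs : 0 ≤ s)
      (hsr : s ≤ r) := lorentzNorm_twoStep_of_ne_top hR0 hp hSU (hRmono hSU) (hRmeas S hS)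
    (hRmeas _ hUm) hU hs hsr
  have htr := htriangle _ _ (measurable_twoStep hA hUm 1 (1 - ε))
    (measurable_twoStep hB hUm 1 (1 - ε))
  rwa [twoStep_add_twoStep, one_add_one_eq_two, show (1 : ℝ) + (1 - ε) = 2 - ε by ring,
    hnorm subset_union_left hA h1ε (by linarith), hnorm subset_union_right hB h1ε (by linarith),
    hnorm (inter_subset_left.trans subset_union_left) (hA.inter hB) (by linarith) (by linarith),
    ← ENNReal.ofReal_add (by positivity) (by positivity),
    ENNReal.ofReal_le_ofReal_iff (by positivity)] at htr

lemma setLIntegral_union_add_inter_le_of_ne_top (hR0 : ν (R ∅) = 0)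
    (hRmeas : ∀ A : Set X, MeasurableSet A → MeasurableSet (R A)) (hRmono : Monotone R)
    (hp : 0 < p)
    (htriangle : ∀ f g : X → ℝ, Measurable f → Measurable g →
      lorentzNorm R ν v p (f + g) ≤ lorentzNorm R ν v p f + lorentzNorm R ν v p g)
    {A B : Set X} (hA : MeasurableSet A) (hB : MeasurableSet B)
    (hU : ∫⁻ y in R (A ∪ B), v y ∂ν ≠ ⊤) :
    (∫⁻ y in R (A ∪ B), v y ∂ν) + ∫⁻ y in R (A ∩ B), v y ∂ν
      ≤ (∫⁻ y in R A, v y ∂ν) + ∫⁻ y in R B, v y ∂ν := by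
  have hIU : A ∩ B ⊆ A ∪ B := inter_subset_left.trans subset_union_left
  rcases eq_or_ne (∫⁻ y in R (A ∪ B), v y ∂ν) 0 with hU0 | hU0
  · have hI0 : ∫⁻ y in R (A ∩ B), v y ∂ν = 0 :=
      le_zero_iff.1 (hU0 ▸ lintegral_mono_set (hRmono hIU))
    simp [hU0, hI0]
  have hsplit {S : Set X} (hSU : S ⊆ A ∪ B) (hS : MeasurableSet S) :=
    toReal_setLIntegral_add_sdiff_of_subset (hRmono hSU) (hRmeas S hS) hU
  have hfin {S : Set X} (hSU : S ⊆ A ∪ B) : ∫⁻ y in R S, v y ∂ν ≠ ⊤ :=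
    ne_top_of_le_ne_top hU (lintegral_mono_set (hRmono hSU))
  have hreal := add_le_add_of_forall_perturbed_rpow_triangle hp.ne' (ENNReal.toReal_pos hU0 hU)
    (hsplit subset_union_left hA) (hsplit subset_union_right hB) (hsplit hIU (hA.inter hB))
    fun _ hε => perturbed_triangle_of_ne_top hR0 hRmeas hRmono hp htriangle hA hB hU hε
  rwa [← ENNReal.toReal_add hU (hfin hIU),
    ← ENNReal.toReal_add (hfin subset_union_left) (hfin subset_union_right),
    ENNReal.toReal_le_toReal (ENNReal.add_ne_top.2 ⟨hU, hfin hIU⟩)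
      (ENNReal.add_ne_top.2 ⟨hfin subset_union_left, hfin subset_union_right⟩)] at hreal

end Concavity

theorem stmt12_general {X Y : Type*} [MeasurableSpace X] [MeasurableSpace Y]
    (ν : Measure Y)
    (R : Set X → Set Y) (hR0 : ν (R ∅) = 0)
    (hRmeas : ∀ A : Set X, MeasurableSet A → MeasurableSet (R A))
    (hRunion : ∀ A : ℕ → Set X, Monotone A → R (⋃ j, A j) = ⋃ j, R (A j))
    (v : Y → ℝ≥0∞)
    (p : ℝ) (hp : 1 ≤ p)
    (htriangle : ∀ f g : X → ℝ, Measurable f → Measurable g →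
      lorentzNorm R ν v p (f + g) ≤ lorentzNorm R ν v p f + lorentzNorm R ν v p g) :
    ∀ A B : Set X, MeasurableSet A → MeasurableSet B →
      (∫⁻ y in R (A ∪ B), v y ∂ν) + ∫⁻ y in R (A ∩ B), v y ∂ν
        ≤ (∫⁻ y in R A, v y ∂ν) + ∫⁻ y in R B, v y ∂ν := by
  intro A B hA hB
  have hp0 : 0 < p := by linarith
  have hRmono := monotone_of_map_iUnion_eq hRunion
  by_cases hU : ∫⁻ y in R (A ∪ B), v y ∂ν = ⊤
  · rw [setLIntegral_add_eq_top_of_union_eq_top hR0 hRmeas hRmono hp0 htriangle hA hB hU]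
    exact le_top
  · exact setLIntegral_union_add_inter_le_of_ne_top hR0 hRmeas hRmono hp0 htriangle hA hB hU

theorem stmt12 {X Y : Type*} [MeasurableSpace X] [MeasurableSpace Y]
    (μ : Measure X) (ν : Measure Y) [SigmaFinite μ] [SigmaFinite ν]
    (R : Set X → Set Y) (hR0 : ν (R ∅) = 0)
    (hRmeas : ∀ A : Set X, MeasurableSet A → MeasurableSet (R A))
    (hRunion : ∀ A : ℕ → Set X, Monotone A → R (⋃ j, A j) = ⋃ j, R (A j))
    (v : Y → ℝ≥0∞) (hv : Measurable v)
    (p : ℝ) (hp : 1 ≤ p)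
    (htriangle : ∀ f g : X → ℝ, Measurable f → Measurable g →
      lorentzNorm R ν v p (f + g) ≤ lorentzNorm R ν v p f + lorentzNorm R ν v p g) :
    ∀ A B : Set X, MeasurableSet A → MeasurableSet B →
      (∫⁻ y in R (A ∪ B), v y ∂ν) + ∫⁻ y in R (A ∩ B), v y ∂ν
        ≤ (∫⁻ y in R A, v y ∂ν) + ∫⁻ y in R B, v y ∂ν :=
  stmt12_general ν R hR0 hRmeas hRunion v p hp htriangle
end

section
/- Let 1 ≤ p < ∞, R be monotone, and v be a weight on Y of the form v = h*_R for some function h on X. If for all measurable functions f on X the saturation property sup{∫_X |f h| dμ : h measurable with h*_R = v} = ∫_Y f*_R v dν holds, then ‖·‖_{Λ^p_R(v)} satisfies the triangle inequality ‖f + g‖_{Λ^p_R(v)} ≤ ‖f‖_{Λ^p_R(v)} + ‖g‖_{Λ^p_R(v)}. -/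
open MeasureTheory Set Filter
open scoped ENNReal NNReal

/-!
Because `R` is monotone, the parameters `t > 0` with `y ∈ R {t < |f|}` form an initial segment of
`(0, ∞)`, so `f*_R(y)` is its supremum; hence `(|f|^p)*_R = (f*_R)^p`. Applying saturation to `|f|^p`
then writes `‖f‖_{Λ^p_R(v)}` as the supremum, over the weights `h` with `h*_R = v`, of the norms of
`f` in `L^p(|h| μ)`; each of these satisfies Minkowski's inequality, hence so does their supremum.
-/

theorem IsLowerSet.volume_inter_Ioi_zero {S : Set ℝ} (hS : IsLowerSet S) :
    volume (S ∩ Ioi 0) = ⨆ t ∈ S ∩ Ioi 0, ENNReal.ofReal t := by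
  refine le_antisymm ?_ (iSup₂_le fun t ht => ?_)
  · set c := ⨆ t ∈ S ∩ Ioi 0, ENNReal.ofReal t
    rcases eq_top_or_lt_top c with hc | hc
    · exact hc ▸ le_top
    have hsub : S ∩ Ioi 0 ⊆ Ioc 0 c.toReal := fun t ht =>
      ⟨ht.2, (ENNReal.ofReal_le_iff_le_toReal hc.ne).1 (le_iSup₂_of_le t ht le_rfl)⟩
    calc volume (S ∩ Ioi 0) ≤ volume (Ioc 0 c.toReal) := measure_mono hsub
      _ = c := by rw [Real.volume_Ioc, sub_zero, ENNReal.ofReal_toReal hc.ne]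
  · calc ENNReal.ofReal t = volume (Ioc 0 t) := by rw [Real.volume_Ioc, sub_zero]
      _ ≤ volume (S ∩ Ioi 0) := measure_mono fun s hs => ⟨hS hs.2 ht.1, hs.1⟩

section Rearrangement

variable {X Y : Type*} {R : Set X → Set Y}

theorem isLowerSet_setOf_mem_superlevel (hR : Monotone R) (f : X → ℝ) (y : Y) :
    IsLowerSet {t : ℝ | y ∈ R {x | t < |f x|}} :=
  fun _ _ hst ht => hR (fun _ hx => lt_of_le_of_lt hst hx) ht

theorem rearr_eq_iSup (hR : Monotone R) (f : X → ℝ) (y : Y) :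
    rearr R f y = ⨆ t ∈ {t : ℝ | y ∈ R {x | t < |f x|}} ∩ Ioi 0, ENNReal.ofReal t := by
  have hS := isLowerSet_setOf_mem_superlevel hR f y
  rw [← hS.volume_inter_Ioi_zero, ← Measure.restrict_apply hS.ordConnected.measurableSet,
    ← lintegral_indicator_one hS.ordConnected.measurableSet]
  rfl

theorem rearr_abs_rpow (hR : Monotone R) {p : ℝ} (hp : 0 < p) (f : X → ℝ) (y : Y) :
    rearr R (fun x => |f x| ^ p) y = rearr R f y ^ p := by
  have hlevel : ∀ s : ℝ, 0 ≤ s → {x | s ^ p < |(|f x| ^ p)|} = {x | s < |f x|} :=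
    fun s hs => by
      ext x
      simp only [mem_ofPred_eq, abs_of_nonneg (Real.rpow_nonneg (abs_nonneg (f x)) p)]
      exact Real.rpow_lt_rpow_iff hs (abs_nonneg _) hp
  have himage : {t : ℝ | y ∈ R {x | t < |(|f x| ^ p)|}} ∩ Ioi 0 =
      (· ^ p) '' ({t : ℝ | y ∈ R {x | t < |f x|}} ∩ Ioi 0) := by
    ext t
    constructor
    · rintro ⟨ht, ht0 : 0 < t⟩
      have hroot : (t ^ p⁻¹) ^ p = t := Real.rpow_inv_rpow ht0.le hp.ne'
      refine ⟨t ^ p⁻¹, ⟨?_, Real.rpow_pos_of_pos ht0 _⟩, hroot⟩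
      rw [mem_ofPred_eq, ← hlevel _ (Real.rpow_nonneg ht0.le _), hroot]
      exact ht
    · rintro ⟨s, ⟨hs, hs0 : 0 < s⟩, rfl⟩
      refine ⟨?_, Real.rpow_pos_of_pos hs0 p⟩
      rw [mem_ofPred_eq, hlevel s hs0.le]
      exact hs
  rw [rearr_eq_iSup hR, rearr_eq_iSup hR, himage, iSup_image, ← ENNReal.orderIsoRpow_apply p hp,
    OrderIso.map_iSup₂]
  refine iSup_congr fun s => iSup_congr fun hs => ?_
  rw [ENNReal.orderIsoRpow_apply, ENNReal.ofReal_rpow_of_nonneg hs.2.le hp.le]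

end Rearrangement

theorem lintegral_enorm_rpow_withDensity {X : Type*} [MeasurableSpace X] (μ : Measure X)
    {f h : X → ℝ} (hf : Measurable f) (hh : Measurable h) {p : ℝ} (hp : 0 ≤ p) :
    ∫⁻ x, ‖f x‖ₑ ^ p ∂(μ.withDensity fun x => ‖h x‖ₑ)
      = ∫⁻ x, ENNReal.ofReal |(|f x| ^ p) * h x| ∂μ := by
  rw [lintegral_withDensity_eq_lintegral_mul μ hh.enorm (hf.enorm.pow_const p)]
  refine lintegral_congr fun x => ?_
  have hfp : 0 ≤ |f x| ^ p := Real.rpow_nonneg (abs_nonneg _) p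
  rw [abs_mul, abs_of_nonneg hfp, ENNReal.ofReal_mul hfp, mul_comm, Pi.mul_apply,
    Real.enorm_eq_ofReal_abs, Real.enorm_eq_ofReal_abs,
    ENNReal.ofReal_rpow_of_nonneg (abs_nonneg _) hp]

theorem lorentzNorm_eq_iSup_eLpNorm {X Y : Type*} [MeasurableSpace X] [MeasurableSpace Y]
    (μ : Measure X) (ν : Measure Y) {R : Set X → Set Y} (hR : Monotone R) {v : Y → ℝ≥0∞}
    {p : ℝ} (hp : 0 < p)
    (hsat : ∀ f : X → ℝ, Measurable f →
      (⨆ (h : X → ℝ) (_ : Measurable h) (_ : rearr R h = v),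
          ∫⁻ x, ENNReal.ofReal |f x * h x| ∂μ)
        = ∫⁻ y, rearr R f y * v y ∂ν)
    {f : X → ℝ} (hf : Measurable f) :
    lorentzNorm R ν v p f = ⨆ (h : X → ℝ) (_ : Measurable h) (_ : rearr R h = v),
      eLpNorm f (ENNReal.ofReal p) (μ.withDensity fun x => ‖h x‖ₑ) := by
  have hp' : (ENNReal.ofReal p).toReal = p := ENNReal.toReal_ofReal hp.le
  have hnorm : ∀ h : X → ℝ, Measurable h →
      eLpNorm f (ENNReal.ofReal p) (μ.withDensity fun x => ‖h x‖ₑ)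
        = (∫⁻ x, ENNReal.ofReal |(|f x| ^ p) * h x| ∂μ) ^ (1 / p) := fun h hh => by
    rw [eLpNorm_eq_lintegral_rpow_enorm_toReal (by simpa using hp) ENNReal.ofReal_ne_top, hp',
      lintegral_enorm_rpow_withDensity μ hf hh hp.le]
  simp only [lorentzNorm, ← rearr_abs_rpow hR hp, ← hsat _ (hf.abs.pow_const p),
    ← ENNReal.orderIsoRpow_apply (1 / p) (one_div_pos.2 hp), OrderIso.map_iSup]
  refine iSup_congr fun h => iSup_congr fun hh => iSup_congr fun _ => (hnorm h hh).symm

theorem stmt13_general {X Y : Type*} [MeasurableSpace X] [MeasurableSpace Y]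
    (μ : Measure X) (ν : Measure Y)
    (R : Set X → Set Y)
    (hRmono : ∀ E F : Set X, E ⊆ F → R E ⊆ R F)
    (v : Y → ℝ≥0∞)
    (p : ℝ) (hp : 1 ≤ p)
    (hsat : ∀ f : X → ℝ, Measurable f →
      (⨆ (h : X → ℝ) (_ : Measurable h) (_ : rearr R h = v),
          ∫⁻ x, ENNReal.ofReal |f x * h x| ∂μ)
        = ∫⁻ y, rearr R f y * v y ∂ν) :
    ∀ f g : X → ℝ, Measurable f → Measurable g →
      lorentzNorm R ν v p (f + g)
        ≤ lorentzNorm R ν v p f + lorentzNorm R ν v p g := by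
  intro f g hf hg
  have hR : Monotone R := fun E F => hRmono E F
  have hp0 : 0 < p := zero_lt_one.trans_le hp
  simp only [lorentzNorm_eq_iSup_eLpNorm μ ν hR hp0 hsat, hf, hg, hf.add hg]
  refine iSup_le fun h => iSup_le fun hh => iSup_le fun hhv => ?_
  calc eLpNorm (f + g) (ENNReal.ofReal p) (μ.withDensity fun x => ‖h x‖ₑ)
      ≤ eLpNorm f (ENNReal.ofReal p) (μ.withDensity fun x => ‖h x‖ₑ)
        + eLpNorm g (ENNReal.ofReal p) (μ.withDensity fun x => ‖h x‖ₑ) :=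
        eLpNorm_add_le hf.aestronglyMeasurable hg.aestronglyMeasurable
          (ENNReal.one_le_ofReal.2 hp)
    _ ≤ _ := by gcongr <;> exact le_iSup₂_of_le h hh (le_iSup_of_le hhv le_rfl)

theorem stmt13 {X Y : Type*} [MeasurableSpace X] [MeasurableSpace Y]
    (μ : Measure X) (ν : Measure Y)
    (R : Set X → Set Y)
    (hRmono : ∀ E F : Set X, E ⊆ F → R E ⊆ R F) (hR0 : ν (R ∅) = 0)
    (v : Y → ℝ≥0∞)
    (hvrearr : ∃ h₀ : X → ℝ, Measurable h₀ ∧ rearr R h₀ = v)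
    (p : ℝ) (hp : 1 ≤ p)
    (hsat : ∀ f : X → ℝ, Measurable f →
      (⨆ (h : X → ℝ) (_ : Measurable h) (_ : rearr R h = v),
          ∫⁻ x, ENNReal.ofReal |f x * h x| ∂μ)
        = ∫⁻ y, rearr R f y * v y ∂ν) :
    ∀ f g : X → ℝ, Measurable f → Measurable g →
      lorentzNorm R ν v p (f + g)
        ≤ lorentzNorm R ν v p f + lorentzNorm R ν v p g :=
  stmt13_general μ ν R hRmono v p hp hsat
end
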